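/- Let G be a finite connected simple graph on V ≥ 2 vertices with edge connectivity η, and suppose G is not a complete graph. Then the spectral gap of the Laplacian matrix satisfies the tighter bound γ_1(G) ≤ η. -/

import Mathlib

open scoped Classical
open Real Finset

/-- The eigenvalues of a Hermitian matrix, listed with multiplicity in increasing order. -/
noncomputable def sortedEigenvalues {n : ℕ} (A : Matrix (Fin n) (Fin n) ℝ) : Fin n → ℝ :=
  if h : A.IsHermitian then h.eigenvalues ∘ ⇑(Tuple.sort h.eigenvalues) else fun _ => 0

/-- The edge connectivity of a graph: the smallest number of edges whose deletion
disconnects the graph. -/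
noncomputable def edgeConnectivity {V : Type*} [Fintype V] (G : SimpleGraph V) : ℕ :=
  sInf {k | ∃ s : Finset (Sym2 V), ↑s ⊆ G.edgeSet ∧ s.card = k ∧
    ¬ (G.deleteEdges ↑s).Connected}

/-!
Fiedler's argument: if deleting a vertex set `S` leaves two nonempty parts `A`, `B` with no edge
between them, the vector equal to `|B|` on `A`, `-|A|` on `B` and `0` on `S` is orthogonal to the
constants, and its Laplacian quadratic form is at most `|S|` times its squared norm because only
edges at `S` contribute; the variational characterisation of `γ₁` then gives `γ₁ ≤ |S|`.

A set `S` with `|S| ≤ η` comes from a minimum edge cut between some `X` and its complement. If some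
`x ∈ X` and `y ∉ X` are not adjacent, pick for every cut edge an endpoint other than `x` and `y`.
Otherwise the cut is complete, so `η ≥ |X| |Xᶜ| ≥ V - 1`, and since `G` is not complete some
non-adjacent pair is separated by the remaining `V - 2` vertices.
-/

open Matrix

namespace Matrix.IsHermitian

variable {ι : Type*} [Fintype ι] [DecidableEq ι] {A : Matrix ι ι ℝ}

lemma dotProduct_eq_sum_eigenvectorBasis (hA : A.IsHermitian) (x y : ι → ℝ) :
    x ⬝ᵥ y =
      ∑ i, ((hA.eigenvectorBasis i).ofLp ⬝ᵥ x) * ((hA.eigenvectorBasis i).ofLp ⬝ᵥ y) := by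
  have := hA.eigenvectorBasis.sum_inner_mul_inner (WithLp.toLp 2 x) (WithLp.toLp 2 y)
  simp only [EuclideanSpace.inner_eq_star_dotProduct, star_trivial] at this
  rw [dotProduct_comm, ← this]
  simp only [dotProduct_comm y]

lemma eigenvectorBasis_dotProduct_mulVec (hA : A.IsHermitian) (i : ι) (x : ι → ℝ) :
    (hA.eigenvectorBasis i).ofLp ⬝ᵥ A *ᵥ x =
      hA.eigenvalues i * ((hA.eigenvectorBasis i).ofLp ⬝ᵥ x) := by
  rw [dotProduct_mulVec, ← mulVec_transpose, ← conjTranspose_eq_transpose_of_trivial, hA.eq,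
    hA.mulVec_eigenvectorBasis, smul_dotProduct, smul_eq_mul]

lemma dotProduct_mulVec_eq_sum (hA : A.IsHermitian) (x : ι → ℝ) :
    x ⬝ᵥ A *ᵥ x = ∑ i, hA.eigenvalues i * ((hA.eigenvectorBasis i).ofLp ⬝ᵥ x) ^ 2 := by
  simp only [hA.dotProduct_eq_sum_eigenvectorBasis x, hA.eigenvectorBasis_dotProduct_mulVec]
  exact sum_congr rfl fun i _ => by ring

end Matrix.IsHermitian

section SortedEigenvalues

variable {n : ℕ} {A : Matrix (Fin n) (Fin n) ℝ}

lemma sortedEigenvalues_of_isHermitian (hA : A.IsHermitian) :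
    sortedEigenvalues A = hA.eigenvalues ∘ Tuple.sort hA.eigenvalues :=
  dif_pos hA

lemma sortedEigenvalues_sort_symm (hA : A.IsHermitian) (i : Fin n) :
    sortedEigenvalues A ((Tuple.sort hA.eigenvalues).symm i) = hA.eigenvalues i := by
  simp [sortedEigenvalues_of_isHermitian hA]

lemma monotone_sortedEigenvalues (A : Matrix (Fin n) (Fin n) ℝ) :
    Monotone (sortedEigenvalues A) := by
  by_cases hA : A.IsHermitian
  · rw [sortedEigenvalues_of_isHermitian hA]
    exact Tuple.monotone_sort _
  · rw [sortedEigenvalues, dif_neg hA]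
    exact monotone_const

theorem sortedEigenvalues_one_mul_dotProduct_self_le (hn : 1 < n) (hA : A.IsHermitian)
    (x : Fin n → ℝ) (hx : ∀ i, hA.eigenvalues i = sortedEigenvalues A ⟨0, by omega⟩ →
      (hA.eigenvectorBasis i).ofLp ⬝ᵥ x = 0) :
    sortedEigenvalues A ⟨1, hn⟩ * (x ⬝ᵥ x) ≤ x ⬝ᵥ A *ᵥ x := by
  rw [hA.dotProduct_eq_sum_eigenvectorBasis x x, hA.dotProduct_mulVec_eq_sum, mul_sum]
  refine sum_le_sum fun i _ => ?_
  by_cases hi : hA.eigenvalues i = sortedEigenvalues A ⟨0, by omega⟩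
  · simp [hx i hi]
  · rw [← sq]
    gcongr
    rw [← sortedEigenvalues_sort_symm hA i] at hi ⊢
    refine monotone_sortedEigenvalues A (Fin.le_def.mpr ?_)
    exact Nat.one_le_iff_ne_zero.mpr fun h => hi (congrArg _ (Fin.ext h))

end SortedEigenvalues

def separationVector {V : Type*} [DecidableEq V] (A B : Finset V) (v : V) : ℝ :=
  #B * (if v ∈ A then 1 else 0) - #A * (if v ∈ B then 1 else 0)

section SeparationVector

variable {V : Type*} [DecidableEq V] {A B : Finset V}

lemma separationVector_of_mem_left (hAB : Disjoint A B) {v : V} (hv : v ∈ A) :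
    separationVector A B v = #B := by
  simp [separationVector, hv, Finset.disjoint_left.mp hAB hv]

lemma separationVector_of_mem_right (hAB : Disjoint A B) {v : V} (hv : v ∈ B) :
    separationVector A B v = -#A := by
  simp [separationVector, hv, Finset.disjoint_right.mp hAB hv]

lemma separationVector_of_notMem {v : V} (hA : v ∉ A) (hB : v ∉ B) :
    separationVector A B v = 0 := by
  simp [separationVector, hA, hB]

lemma sum_separationVector [Fintype V] (A B : Finset V) : ∑ v, separationVector A B v = 0 := by
  simp only [separationVector, sum_sub_distrib, ← mul_sum, sum_boole, filter_mem_eq_inter,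
    univ_inter]
  ring

lemma separationVector_dotProduct_self [Fintype V] (hAB : Disjoint A B) :
    separationVector A B ⬝ᵥ separationVector A B = #A * #B * (#A + #B) := by
  have hsq : ∀ v, separationVector A B v * separationVector A B v =
      #B ^ 2 * (if v ∈ A then 1 else 0) + #A ^ 2 * (if v ∈ B then 1 else 0) := by
    intro v
    by_cases hA : v ∈ A
    · simp [separationVector, hA, disjoint_left.mp hAB hA, sq]
    · by_cases hB : v ∈ B <;> simp [separationVector, hA, hB, sq]
  simp only [dotProduct, hsq, sum_add_distrib, ← mul_sum, sum_boole, filter_mem_eq_inter,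
    univ_inter]
  ring

end SeparationVector

namespace SimpleGraph

structure IsSeparation {V : Type*} (G : SimpleGraph V) (A B : Finset V) : Prop where
  left_nonempty : A.Nonempty
  right_nonempty : B.Nonempty
  disjoint : Disjoint A B
  not_adj : ∀ a ∈ A, ∀ b ∈ B, ¬ G.Adj a b

lemma isSeparation_singleton {V : Type*} {G : SimpleGraph V} {p q : V} (hpq : p ≠ q)
    (h : ¬ G.Adj p q) :
    G.IsSeparation {p} {q} :=
  ⟨singleton_nonempty p, singleton_nonempty q, disjoint_singleton.mpr hpq, by simpa using h⟩

section Laplacian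

variable {V : Type*} [Fintype V] [DecidableEq V] (G : SimpleGraph V) [DecidableRel G.Adj]

lemma dotProduct_eq_zero_of_lapMatrix_mulVec_eq_zero (hG : G.Preconnected) {y : V → ℝ}
    (hy : G.lapMatrix ℝ *ᵥ y = 0) {x : V → ℝ} (hx : ∑ v, x v = 0) : y ⬝ᵥ x = 0 := by
  rcases isEmpty_or_nonempty V with hV | ⟨⟨v₀⟩⟩
  · simp [dotProduct]
  have hconst : ∀ v, y v = y v₀ := fun v =>
    (G.lapMatrix_mulVec_eq_zero_iff_forall_reachable.mp hy) v v₀ (hG v v₀)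
  simp only [dotProduct, hconst, ← mul_sum, hx, mul_zero]

lemma lapMatrix_dotProduct_mulVec_le (S : Finset V) {x : V → ℝ} (hS : ∀ v ∈ S, x v = 0)
    (hx : ∀ u v, G.Adj u v → u ∉ S → v ∉ S → x u = x v) :
    x ⬝ᵥ G.lapMatrix ℝ *ᵥ x ≤ #S * (x ⬝ᵥ x) := by
  -- an edge contributes only if it meets `S`, and then it contributes `x²` at its other end
  have hpair : ∀ u v, (if G.Adj u v then (x u - x v) ^ 2 else 0) ≤
      (if u ∈ S then 1 else 0) * x v ^ 2 + (if v ∈ S then 1 else 0) * x u ^ 2 := by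
    intro u v
    by_cases huv : G.Adj u v <;> by_cases hu : u ∈ S <;> by_cases hv : v ∈ S <;>
      simp [huv, hu, hv, hS, hx u v, sq_nonneg]
  have hsum : ∑ u, ∑ v, ((if u ∈ S then 1 else 0) * x v ^ 2 +
      (if v ∈ S then 1 else 0) * x u ^ 2) = 2 * (#S * (x ⬝ᵥ x)) := by
    simp only [sum_add_distrib, ← sum_mul, ← mul_sum, sum_boole, filter_mem_eq_inter, univ_inter,
      dotProduct, ← sq]
    ring
  rw [← toLinearMap₂'_apply', lapMatrix_toLinearMap₂']
  linarith [sum_le_sum fun u (_ : u ∈ univ) => sum_le_sum fun v (_ : v ∈ univ) => hpair u v]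

end Laplacian

lemma lapMatrix_sortedEigenvalues_zero {n : ℕ} (hn : 0 < n) (G : SimpleGraph (Fin n))
    [DecidableRel G.Adj] : sortedEigenvalues (G.lapMatrix ℝ) ⟨0, hn⟩ = 0 := by
  have hL := G.posSemidef_lapMatrix ℝ
  have : Nonempty (Fin n) := ⟨⟨0, hn⟩⟩
  obtain ⟨i, -, hi⟩ :=
    prod_eq_zero_iff.mp (hL.1.det_eq_prod_eigenvalues.symm.trans G.det_lapMatrix_eq_zero)
  refine le_antisymm ?_ ?_
  · calc sortedEigenvalues (G.lapMatrix ℝ) ⟨0, hn⟩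
        ≤ sortedEigenvalues (G.lapMatrix ℝ) ((Tuple.sort hL.1.eigenvalues).symm i) :=
          monotone_sortedEigenvalues _ (Fin.le_def.mpr (Nat.zero_le _))
      _ = 0 := by rw [sortedEigenvalues_sort_symm hL.1]; exact_mod_cast hi
  · rw [sortedEigenvalues_of_isHermitian hL.1]
    exact hL.eigenvalues_nonneg _

lemma lapMatrix_sortedEigenvalues_one_mul_le {n : ℕ} (hn : 1 < n) (G : SimpleGraph (Fin n))
    [DecidableRel G.Adj] (hG : G.Preconnected) {x : Fin n → ℝ} (hx : ∑ v, x v = 0) :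
    sortedEigenvalues (G.lapMatrix ℝ) ⟨1, hn⟩ * (x ⬝ᵥ x) ≤ x ⬝ᵥ G.lapMatrix ℝ *ᵥ x := by
  have hL := G.isHermitian_lapMatrix ℝ
  refine sortedEigenvalues_one_mul_dotProduct_self_le hn hL x fun i hi => ?_
  rw [lapMatrix_sortedEigenvalues_zero] at hi
  refine G.dotProduct_eq_zero_of_lapMatrix_mulVec_eq_zero hG ?_ hx
  rw [hL.mulVec_eigenvectorBasis, hi, zero_smul]

theorem IsSeparation.lapMatrix_sortedEigenvalues_one_le {n : ℕ} {G : SimpleGraph (Fin n)}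
    [DecidableRel G.Adj] {A B : Finset (Fin n)} (hsep : G.IsSeparation A B) (hn : 1 < n)
    (hG : G.Preconnected) : sortedEigenvalues (G.lapMatrix ℝ) ⟨1, hn⟩ ≤ #(A ∪ B)ᶜ := by
  obtain ⟨hA, hB, hAB, hAdj⟩ := hsep
  have hpos : 0 < separationVector A B ⬝ᵥ separationVector A B := by
    rw [separationVector_dotProduct_self hAB]
    have := hA.card_pos
    have := hB.card_pos
    positivity
  have hquad : separationVector A B ⬝ᵥ G.lapMatrix ℝ *ᵥ separationVector A B ≤
      #(A ∪ B)ᶜ * (separationVector A B ⬝ᵥ separationVector A B) := by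
    refine G.lapMatrix_dotProduct_mulVec_le _ (fun v hv => ?_) fun u v huv hu hv => ?_
    · simp only [mem_compl, mem_union, not_or] at hv
      exact separationVector_of_notMem hv.1 hv.2
    · simp only [mem_compl, mem_union, not_not] at hu hv
      rcases hu with hu | hu <;> rcases hv with hv | hv
      · rw [separationVector_of_mem_left hAB hu, separationVector_of_mem_left hAB hv]
      · exact absurd huv (hAdj u hu v hv)
      · exact absurd huv.symm (hAdj v hv u hu)
      · rw [separationVector_of_mem_right hAB hu, separationVector_of_mem_right hAB hv]
  exact le_of_mul_le_mul_right
    ((G.lapMatrix_sortedEigenvalues_one_mul_le hn hG (sum_separationVector A B)).trans hquad) hpos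

section Cuts

variable {V : Type*} [Fintype V]

lemma exists_edgeCut_card_eq_edgeConnectivity [Nontrivial V] (G : SimpleGraph V) :
    ∃ F : Finset (Sym2 V), #F = edgeConnectivity G ∧ ¬ (G.deleteEdges ↑F).Connected := by
  obtain ⟨F, -, hF⟩ := Nat.sInf_mem (s := {k | ∃ F : Finset (Sym2 V), ↑F ⊆ G.edgeSet ∧ #F = k ∧
      ¬ (G.deleteEdges ↑F).Connected}) ⟨_, G.edgeFinset, by simp, rfl, by
    simpa using fun h : (⊥ : SimpleGraph V).Connected => not_preconnected_bot h.preconnected⟩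
  exact ⟨F, hF⟩

lemma exists_finset_not_adj_compl_of_not_connected [DecidableEq V] [Nonempty V]
    {H : SimpleGraph V} (hH : ¬ H.Connected) :
    ∃ X : Finset V, X.Nonempty ∧ Xᶜ.Nonempty ∧ ∀ a ∈ X, ∀ b ∉ X, ¬ H.Adj a b := by
  obtain ⟨u, w, huw⟩ : ∃ u w, ¬ H.Reachable u w := by
    simpa [connected_iff, Preconnected] using hH
  refine ⟨univ.filter (H.Reachable u), ⟨u, by simp⟩, ⟨w, by simpa using huw⟩,
    fun a ha b hb hab => ?_⟩
  simp only [mem_filter, mem_univ, true_and] at ha hb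
  exact hb (ha.trans hab.reachable)

variable [DecidableEq V] {G : SimpleGraph V} [DecidableRel G.Adj]

lemma card_interedges_le {X : Finset V} {F : Finset (Sym2 V)}
    (hF : ∀ a ∈ X, ∀ b ∉ X, G.Adj a b → s(a, b) ∈ F) : #(G.interedges X Xᶜ) ≤ #F := by
  refine card_le_card_of_injOn (fun e => s(e.1, e.2)) (fun e he => ?_) fun e he e' he' hee' => ?_
  · simp only [mem_coe, mem_interedges_iff, mem_compl] at he
    exact hF _ he.1 _ he.2.1 he.2.2
  · simp only [mem_coe, mem_interedges_iff, mem_compl] at he he'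
    rcases Sym2.eq_iff.mp hee' with ⟨h₁, h₂⟩ | ⟨h₁, -⟩
    · exact Prod.ext h₁ h₂
    · exact absurd (h₁ ▸ he.1) he'.2.1

lemma exists_isSeparation_card_le_card_interedges {X : Finset V} {x₀ y₀ : V} (hx₀ : x₀ ∈ X)
    (hy₀ : y₀ ∉ X) (h : ¬ G.Adj x₀ y₀) :
    ∃ A B, G.IsSeparation A B ∧ #(A ∪ B)ᶜ ≤ #(G.interedges X Xᶜ) := by
  set S := (G.interedges X Xᶜ).image fun e => if e.1 = x₀ then e.2 else e.1
  have hS : ∀ a b, G.Adj a b → a ∈ X → b ∉ X → a ∈ S ∨ b ∈ S := by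
    intro a b hab ha hb
    have : (a, b) ∈ G.interedges X Xᶜ := by simp [mem_interedges_iff, ha, hb, hab]
    by_cases ha₀ : a = x₀
    · exact Or.inr (mem_image.mpr ⟨_, this, by simp [ha₀]⟩)
    · exact Or.inl (mem_image.mpr ⟨_, this, by simp [ha₀]⟩)
  have hx₀S : x₀ ∉ S := by
    simp only [S, mem_image, mem_interedges_iff, mem_compl, not_exists, not_and]
    rintro e ⟨-, he₂, -⟩ hval
    split_ifs at hval with he
    · exact he₂ (hval ▸ hx₀)
    · exact he hval
  have hy₀S : y₀ ∉ S := by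
    simp only [S, mem_image, mem_interedges_iff, mem_compl, not_exists, not_and]
    rintro e ⟨he₁, -, hadj⟩ hval
    split_ifs at hval with he
    · exact h (he ▸ hval ▸ hadj)
    · exact hy₀ (hval ▸ he₁)
  refine ⟨X \ S, Xᶜ \ S, ⟨⟨x₀, ?_⟩, ⟨y₀, ?_⟩, ?_, ?_⟩, ?_⟩
  · simp [hx₀, hx₀S]
  · simp [hy₀, hy₀S]
  · exact disjoint_compl_right.mono sdiff_subset sdiff_subset
  · intro a ha b hb hab
    simp only [mem_sdiff, mem_compl] at ha hb
    rcases hS a b hab ha.1 hb.1 with h | h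
    · exact ha.2 h
    · exact hb.2 h
  · refine (card_le_card (t := S) fun v hv => ?_).trans card_image_le
    simp only [mem_compl, mem_union, mem_sdiff] at hv
    tauto

lemma card_le_card_interedges_add_one {X : Finset V} (hX : X.Nonempty) (hXc : Xᶜ.Nonempty)
    (h : ∀ a ∈ X, ∀ b ∉ X, G.Adj a b) : Fintype.card V ≤ #(G.interedges X Xᶜ) + 1 := by
  have hcomplete : G.interedges X Xᶜ = X ×ˢ Xᶜ := by
    ext e
    simp only [mem_interedges_iff, mem_product, mem_compl]
    exact ⟨fun he => ⟨he.1, he.2.1⟩, fun he => ⟨he.1, he.2, h _ he.1 _ he.2⟩⟩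
  rw [hcomplete, card_product, ← card_add_card_compl X]
  nlinarith [hX.card_pos, hXc.card_pos]

theorem exists_isSeparation_card_le_edgeConnectivity (hG : G ≠ ⊤) :
    ∃ A B, G.IsSeparation A B ∧ #(A ∪ B)ᶜ ≤ edgeConnectivity G := by
  obtain ⟨p, q, hpq, hnadj⟩ := ne_top_iff_exists_not_adj.mp hG
  have : Nontrivial V := ⟨p, q, hpq⟩
  obtain ⟨F, hFcard, hF⟩ := G.exists_edgeCut_card_eq_edgeConnectivity
  obtain ⟨X, hX, hXc, hcut⟩ := exists_finset_not_adj_compl_of_not_connected hF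
  have hcross : ∀ a ∈ X, ∀ b ∉ X, G.Adj a b → s(a, b) ∈ F := fun a ha b hb hab => by
    simpa [hab] using hcut a ha b hb
  rw [← hFcard]
  by_cases h : ∃ x₀ ∈ X, ∃ y₀ ∉ X, ¬ G.Adj x₀ y₀
  · obtain ⟨x₀, hx₀, y₀, hy₀, h⟩ := h
    obtain ⟨A, B, hAB, hcard⟩ := exists_isSeparation_card_le_card_interedges hx₀ hy₀ h
    exact ⟨A, B, hAB, hcard.trans (card_interedges_le hcross)⟩
  · push Not at h
    refine ⟨{p}, {q}, isSeparation_singleton hpq hnadj, ?_⟩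
    have := card_le_card_interedges_add_one hX hXc h
    rw [card_compl, ← insert_eq, card_pair hpq]
    have := card_interedges_le hcross
    omega

end Cuts

end SimpleGraph

theorem fiedler_upper_bound_noncomplete {V : ℕ} (hV : 2 ≤ V) (G : SimpleGraph (Fin V))
    (hG : G.Connected) (hnc : G ≠ ⊤) :
    sortedEigenvalues (G.lapMatrix ℝ) ⟨1, by omega⟩ ≤ (edgeConnectivity G : ℝ) := by
  obtain ⟨A, B, hAB, hcard⟩ := G.exists_isSeparation_card_le_edgeConnectivity hnc
  exact (hAB.lapMatrix_sortedEigenvalues_one_le (by omega) hG.preconnected).trans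
    (by exact_mod_cast hcard)
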